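/- arXiv:0706.0675 — 5 statements merged into one kernel-verified Lean document; each statement's English description precedes it below -/
import Mathlib

section
/- Let R be a commutative ring and A a commutative unital R-algebra whose structure map algebraMap : R → A is injective. Suppose Q is an ideal of A such that A is the internal direct sum, as R-modules, of Q and the image R·1 of R under the structure map. Then every unit u of A can be written as u = algebraMap(λ) + x where λ is a unit of R and x ∈ Q. -/
/-!
The two hypotheses say exactly that the composite `R → A → A ⧸ Q` is bijective, hence a ring
isomorphism. The scalar part of `u` is then the image of `u` under the ring homomorphism
`A → A ⧸ Q ≃ R`, and ring homomorphisms send units to units.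
-/

section
variable {R A : Type*} [CommRing R] [CommRing A] [Algebra R A] (Q : Ideal A)

theorem algebraMap_quotient_injective_of_inf_span_one_eq_bot
    (hinj : Function.Injective (algebraMap R A))
    (hinf : Q.restrictScalars R ⊓ Submodule.span R {(1 : A)} = ⊥) :
    Function.Injective (algebraMap R (A ⧸ Q)) := by
  refine (injective_iff_map_eq_zero _).2 fun r hr => hinj ?_
  have hQ : algebraMap R A r ∈ Q := by
    rwa [← Ideal.Quotient.mk_algebraMap, Ideal.Quotient.eq_zero_iff_mem] at hr
  have hspan : algebraMap R A r ∈ Submodule.span R {(1 : A)} :=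
    Submodule.mem_span_singleton.2 ⟨r, (Algebra.algebraMap_eq_smul_one r).symm⟩
  have : algebraMap R A r ∈ (⊥ : Submodule R A) := hinf ▸ ⟨hQ, hspan⟩
  rwa [map_zero, ← Submodule.mem_bot R]

theorem algebraMap_quotient_surjective_of_sup_span_one_eq_top
    (hsup : Q.restrictScalars R ⊔ Submodule.span R {(1 : A)} = ⊤) :
    Function.Surjective (algebraMap R (A ⧸ Q)) := by
  rintro ⟨a⟩
  obtain ⟨x, hx, y, hy, rfl⟩ := Submodule.mem_sup.1 (hsup ▸ Submodule.mem_top : a ∈ _)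
  obtain ⟨r, rfl⟩ := Submodule.mem_span_singleton.1 hy
  refine ⟨r, (Ideal.Quotient.eq.2 ?_).symm⟩
  simpa [Algebra.algebraMap_eq_smul_one] using hx

theorem exists_unit_algebraMap_add_mem_of_bijective
    (hbij : Function.Bijective (algebraMap R (A ⧸ Q))) (u : Aˣ) :
    ∃ (lam : Rˣ) (x : A), x ∈ Q ∧ (u : A) = algebraMap R A lam + x := by
  let e := RingEquiv.ofBijective (algebraMap R (A ⧸ Q)) hbij
  let lam : Rˣ := Units.map (e.symm.toMonoidHom.comp (Ideal.Quotient.mk Q).toMonoidHom) u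
  refine ⟨lam, u - algebraMap R A lam, ?_, by ring⟩
  rw [← Ideal.Quotient.eq]
  exact (e.apply_symm_apply _).symm
end

/-- **Final statement of Lemma 2.1 of the paper (abstract form).**
If `Q` is an ideal of a commutative unital `R`-algebra `A` (with injective structure
map) such that `A` is, as an `R`-module, the internal direct sum of `Q` and the image
`R·1` of `R`, then every unit `u` of `A` has the form `u = algebraMap R A λ + x` with
`λ` a unit of `R` and `x ∈ Q`. -/
theorem unit_eq_unit_scalar_add_ideal
    (R A : Type*) [CommRing R] [CommRing A] [Algebra R A]
    (hinj : Function.Injective (algebraMap R A))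
    (Q : Ideal A)
    (hinf : Submodule.restrictScalars R Q ⊓ Submodule.span R {(1 : A)} = ⊥)
    (hsup : Submodule.restrictScalars R Q ⊔ Submodule.span R {(1 : A)} = ⊤) :
    ∀ u : Aˣ, ∃ (lam : Rˣ) (x : A), x ∈ Q ∧ (u : A) = algebraMap R A lam + x :=
  exists_unit_algebraMap_add_mem_of_bijective Q
    ⟨algebraMap_quotient_injective_of_inf_span_one_eq_bot Q hinj hinf,
      algebraMap_quotient_surjective_of_sup_span_one_eq_top Q hsup⟩
end

section
/- Let Γ₀, δ, Γ, K_Γ and τ be as in the context. Then for every integer n ≥ 2 the polynomial X^{n−1} − τ (that is, X^{n−1} − C τ, where C is the constant-coefficient embedding) is irreducible in the polynomial ring K_Γ[X]. -/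
/-!
Put `m = n - 1` and `σ = single (δ / m) 1`, a Hahn series with real exponents, so that
`σ ^ m = τ`. The exponents `i δ / m` (`0 ≤ i < m`) lie in pairwise distinct cosets of `Γ`,
since `δ` is `ℚ`-independent of `Γ₀`. Series over `Γ` multiplied by monomials from distinct
cosets have disjoint supports, so `1, σ, …, σ^(m-1)` are linearly independent over `K_Γ`.
Hence the minimal polynomial of `σ` has degree `m` and must be `X^m - τ`.
-/

open Polynomial HahnSeries

theorem Polynomial.irreducible_X_pow_sub_C_of_linearIndependent_pow {K L : Type*} [Field K]
    [CommRing L] [IsDomain L] [Algebra K L] {m : ℕ} (hm : m ≠ 0) {a : K} {α : L}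
    (hα : α ^ m = algebraMap K L a) (hind : LinearIndependent K fun i : Fin m ↦ α ^ (i : ℕ)) :
    Irreducible (X ^ m - C a) := by
  have monic : (X ^ m - C a).Monic := monic_X_pow_sub_C a hm
  have root : aeval α (X ^ m - C a) = 0 := by simp [hα]
  rw [← minpoly.eq_of_linearIndependent K α monic root m (degree_X_pow_sub_C (by omega) a) hind]
  exact minpoly.irreducible ⟨_, monic, root⟩

theorem AddSubgroup.exists_int_eq_of_smul_mem_sup_zmultiples {V : Type*} [AddCommGroup V]
    [Module ℚ V] {Γ₀ : AddSubgroup V} {δ : V} (hδ : δ ∉ Submodule.span ℚ (Γ₀ : Set V))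
    {q : ℚ} (hq : q • δ ∈ Γ₀ ⊔ zmultiples δ) : ∃ k : ℤ, q = k := by
  obtain ⟨g, hg, _, ⟨k, rfl⟩, hgk⟩ := mem_sup.1 hq
  refine ⟨k, by_contra fun hqk ↦ hδ ?_⟩
  have : (q - k) • δ = g := by
    rw [sub_smul, ← hgk, Int.cast_smul_eq_zsmul, add_sub_cancel_right]
  rw [← inv_smul_smul₀ (sub_ne_zero.2 hqk) δ, this]
  exact Submodule.smul_mem _ _ (Submodule.subset_span hg)

theorem AddSubgroup.pairwise_nsmul_sub_nsmul_notMem_sup_zmultiples {V : Type*} [AddCommGroup V]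
    [Module ℚ V] {Γ₀ : AddSubgroup V} {δ : V} (hδ : δ ∉ Submodule.span ℚ (Γ₀ : Set V)) (m : ℕ) :
    Pairwise fun i j : Fin m ↦
      (i : ℕ) • (m : ℚ)⁻¹ • δ - (j : ℕ) • (m : ℚ)⁻¹ • δ ∉ Γ₀ ⊔ zmultiples δ := by
  intro i j hij hmem
  have hm : (m : ℚ) ≠ 0 := by have := i.pos; positivity
  rw [← Nat.cast_smul_eq_nsmul ℚ, ← Nat.cast_smul_eq_nsmul ℚ, ← sub_smul, smul_smul] at hmem
  obtain ⟨k, hk⟩ := exists_int_eq_of_smul_mem_sup_zmultiples hδ hmem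
  have hdvd : (m : ℤ) ∣ (i : ℤ) - j := ⟨k, by field_simp at hk; exact_mod_cast hk⟩
  have := Int.eq_zero_of_abs_lt_dvd hdvd (by rw [abs_lt]; omega)
  exact hij (Fin.ext (by omega))

namespace HahnSeries

variable {Λ R : Type*} [AddCommGroup Λ] [LinearOrder Λ] [IsOrderedAddMonoid Λ] [CommRing R]
  {Γ : AddSubgroup Λ}

noncomputable instance : Algebra (HahnSeries Γ R) (HahnSeries Λ R) :=
  (embDomainRingHom Γ.subtype Subtype.val_injective fun _ _ ↦ Iff.rfl).toAlgebra

theorem algebraMap_addSubgroup_eq_embDomain (x : HahnSeries Γ R) :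
    algebraMap (HahnSeries Γ R) (HahnSeries Λ R) x = embDomain (OrderEmbedding.subtype _) x :=
  rfl

theorem linearIndependent_single_of_pairwise_sub_notMem {ι : Type*} {x : ι → Λ}
    (hx : Pairwise fun i j ↦ x i - x j ∉ Γ) :
    LinearIndependent (HahnSeries Γ R) fun i ↦ single (x i) (1 : R) := by
  classical
  rw [linearIndependent_iff']
  intro s c hs i hi
  ext γ
  have hcoeff : ∀ j, (c j • single (x j) (1 : R)).coeff (γ + x i) =
      if j = i then (c i).coeff γ else 0 := by
    intro j
    rw [Algebra.smul_def, algebraMap_addSubgroup_eq_embDomain,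
      ← sub_add_cancel ((γ : Λ) + x i) (x j), coeff_mul_single_add, mul_one]
    split_ifs with hji
    · subst hji
      rw [add_sub_cancel_right]
      exact embDomain_coeff
    · refine embDomain_of_notMem_range ?_
      rintro ⟨γ', hγ'⟩
      refine hx (Ne.symm hji) ?_
      have : x i - x j = γ' - γ := by
        rw [show (γ' : Λ) = γ + x i - x j from hγ']
        abel
      rw [this]
      exact sub_mem γ'.2 γ.2
  simpa [hcoeff, hi] using congrArg (coeff · (γ + x i)) hs

end HahnSeries

theorem X_pow_sub_tau_irreducible_general
    (Γ₀ : AddSubgroup ℝ) (δ : ℝ)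
    (hind : δ ∉ Submodule.span ℚ (Γ₀ : Set ℝ))
    (n : ℕ) (hn : 2 ≤ n) :
    Irreducible
      (Polynomial.X ^ (n - 1) -
        Polynomial.C (HahnSeries.single
          (⟨δ, (le_sup_right : AddSubgroup.zmultiples δ ≤ Γ₀ ⊔ AddSubgroup.zmultiples δ)
              (AddSubgroup.mem_zmultiples δ)⟩ : ↥(Γ₀ ⊔ AddSubgroup.zmultiples δ))
          (1 : ℚ))) := by
  have hm : ((n - 1 : ℕ) : ℚ) ≠ 0 := by norm_cast; omega
  set σ : HahnSeries ℝ ℚ := single (((n - 1 : ℕ) : ℚ)⁻¹ • δ) 1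
  refine irreducible_X_pow_sub_C_of_linearIndependent_pow (by omega) (α := σ) ?_ ?_
  · rw [algebraMap_addSubgroup_eq_embDomain, embDomain_single, single_pow, one_pow,
      ← Nat.cast_smul_eq_nsmul ℚ, smul_inv_smul₀ hm]
    rfl
  · simp only [σ, single_pow, one_pow]
    exact linearIndependent_single_of_pairwise_sub_notMem
      (AddSubgroup.pairwise_nsmul_sub_nsmul_notMem_sup_zmultiples hind _)

/-- The polynomial `X^(n-1) - τ` is irreducible over the Novikov field
`K_Γ = HahnSeries Γ ℚ`, where `Γ = Γ₀ + ℤδ` with `δ > 0` a real number that is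
ℚ-linearly independent from `Γ₀`, and `τ = single δ 1` is the monomial `t^{-δ}`.
(Used in the proof of Lemma 2.3 of the paper.) -/
theorem X_pow_sub_tau_irreducible
    (Γ₀ : AddSubgroup ℝ) (δ : ℝ) (hδ : 0 < δ)
    (hind : δ ∉ Submodule.span ℚ (Γ₀ : Set ℝ))
    (n : ℕ) (hn : 2 ≤ n) :
    Irreducible
      (Polynomial.X ^ (n - 1) -
        Polynomial.C (HahnSeries.single
          (⟨δ, (le_sup_right : AddSubgroup.zmultiples δ ≤ Γ₀ ⊔ AddSubgroup.zmultiples δ)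
              (AddSubgroup.mem_zmultiples δ)⟩ : ↥(Γ₀ ⊔ AddSubgroup.zmultiples δ))
          (1 : ℚ))) :=
  X_pow_sub_tau_irreducible_general Γ₀ δ hind n hn
end

section
/- Let Γ₀, δ, Γ, K_Γ and τ be as in the context, and let n ≥ 2 be an integer. Set L := K_Γ[X] ⧸ (X^{n−1} − τ), the quotient of the polynomial ring by the principal ideal generated by X^{n−1} − τ. Then L is a field, and the quotient ring R := K_Γ[X] ⧸ (X^n − τ·X) is isomorphic, as a ring, to the product K_Γ × L; in particular R decomposes as a direct sum of two fields. -/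
/-!
Since `X ^ n - τ X = X * (X ^ (n - 1) - τ)` and `τ` is a unit, the two factors are coprime and
the Chinese remainder theorem splits the quotient as `K_Γ × L`. For `L` to be a field we need
`X ^ m - τ` (with `m = n - 1`) irreducible. An irreducible factor of degree `0 < d < m` would,
through the norm of its root, give `b ^ m = τ ^ d`; comparing orders, `m * ord b = d * δ` in `ℝ`.
Writing `ord b = y + k δ` with `y ∈ Γ₀`, the independence of `δ` from `Γ₀` forces `d = m k`,
which is impossible for `0 < d < m`.
-/

open Polynomial

namespace Polynomial

theorem X_pow_sub_C_irreducible_of_forall_pow_ne_pow {K : Type*} [Field K] {m : ℕ} (hm : m ≠ 0)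
    {a : K} (ha : ∀ (d : ℕ) (b : K), 0 < d → d < m → b ^ m ≠ a ^ d) :
    Irreducible (X ^ m - C a) := by
  have hm0 : 0 < m := Nat.pos_of_ne_zero hm
  have hnu : ¬ IsUnit ((X : K[X]) ^ m - C a) := by
    rw [isUnit_iff_degree_eq_zero, degree_X_pow_sub_C hm0, Nat.cast_eq_zero]
    exact hm
  obtain ⟨g, hg, hgdvd⟩ := WfDvdMonoid.exists_irreducible_factor hnu (X_pow_sub_C_ne_zero hm0 a)
  suffices natDegree g = m from (associated_of_dvd_of_natDegree_le hgdvd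
    (X_pow_sub_C_ne_zero hm0 a) (this.trans natDegree_X_pow_sub_C.symm).ge).irreducible hg
  by_contra hne
  -- The norm of a root `r` of `g` satisfies `N(r) ^ m = N(r ^ m) = N(a) = a ^ deg g`.
  have hnorm : Algebra.norm K (AdjoinRoot.root g) ^ m = a ^ g.natDegree := by
    have := eval₂_eq_zero_of_dvd_of_eval₂_eq_zero _ _ hgdvd (AdjoinRoot.eval₂_root g)
    rw [eval₂_sub, eval₂_pow, eval₂_C, eval₂_X, sub_eq_zero] at this
    rw [← map_pow, this, ← AdjoinRoot.algebraMap_eq, Algebra.norm_algebraMap,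
      (AdjoinRoot.powerBasis hg.ne_zero).finrank, AdjoinRoot.powerBasis_dim hg.ne_zero]
  have hdeg_pos : 0 < g.natDegree := natDegree_pos_iff_degree_pos.mpr (degree_pos_of_irreducible hg)
  have hdeg_lt : g.natDegree < m := lt_of_le_of_ne
    ((natDegree_le_of_dvd hgdvd (X_pow_sub_C_ne_zero hm0 a)).trans_eq natDegree_X_pow_sub_C) hne
  exact ha _ _ hdeg_pos hdeg_lt hnorm

theorem isCoprime_X_X_pow_succ_sub_C {R : Type*} [CommRing R] {a : R} (ha : IsUnit a) (k : ℕ) :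
    IsCoprime X (X ^ (k + 1) - C a) := by
  obtain ⟨u, rfl⟩ := ha
  refine ⟨C ((u⁻¹ : Rˣ) : R) * X ^ k, -C ((u⁻¹ : Rˣ) : R), ?_⟩
  have hinv : C ((u⁻¹ : Rˣ) : R) * C (u : R) = 1 := by rw [← C_mul, u.inv_mul, C_1]
  linear_combination hinv

end Polynomial

namespace AdjoinRoot

noncomputable def mulEquivProdOfIsCoprime {R : Type*} [CommRing R] {f g : R[X]}
    (h : IsCoprime f g) : AdjoinRoot (f * g) ≃+* AdjoinRoot f × AdjoinRoot g :=
  (Ideal.quotEquivOfEq (Ideal.span_singleton_mul_span_singleton f g).symm).trans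
    (Ideal.quotientMulEquivQuotientProd _ _ ((Ideal.isCoprime_span_singleton_iff f g).mpr h))

noncomputable def XEquiv (R : Type*) [CommRing R] : AdjoinRoot (X : R[X]) ≃+* R :=
  (Ideal.quotEquivOfEq (by rw [map_zero, sub_zero])).trans
    (quotientSpanXSubCAlgEquiv (0 : R)).toRingEquiv

theorem nonempty_ringEquiv_prod_of_X_pow_sub_C_mul_X {R : Type*} [CommRing R] {a : R}
    (ha : IsUnit a) {n : ℕ} (hn : 2 ≤ n) :
    Nonempty
      (AdjoinRoot (X ^ n - C a * X : R[X]) ≃+* R × AdjoinRoot (X ^ (n - 1) - C a : R[X])) := by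
  obtain ⟨k, rfl⟩ : ∃ k, n = k + 2 := ⟨n - 2, by omega⟩
  have hfactor : (X ^ (k + 2) - C a * X : R[X]) = X * (X ^ (k + 1) - C a) := by ring
  rw [hfactor, show k + 2 - 1 = k + 1 by omega]
  exact ⟨(mulEquivProdOfIsCoprime (isCoprime_X_X_pow_succ_sub_C ha k)).trans
    ((XEquiv R).prodCongr (RingEquiv.refl _))⟩

end AdjoinRoot

theorem int_dvd_of_mul_eq_mul_of_notMem_span {Γ₀ : AddSubgroup ℝ} {δ : ℝ}
    (hind : δ ∉ Submodule.span ℚ (Γ₀ : Set ℝ)) {g : ℝ} (hg : g ∈ Γ₀ ⊔ AddSubgroup.zmultiples δ)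
    {m d : ℤ} (h : m * g = d * δ) : m ∣ d := by
  obtain ⟨y, hy, _, ⟨k, rfl⟩, rfl⟩ := AddSubgroup.mem_sup.mp hg
  by_contra hndvd
  have hne : (d : ℝ) - m * k ≠ 0 := by
    intro h0
    exact hndvd ⟨k, by exact_mod_cast (sub_eq_zero.mp h0)⟩
  apply hind
  have hδ : δ = ((m / (d - m * k) : ℚ) : ℝ) * y := by
    push_cast
    field_simp
    simp only [zsmul_eq_mul] at h
    linear_combination -h
  rw [hδ, ← Rat.smul_def]
  exact Submodule.smul_mem _ _ (Submodule.subset_span hy)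

theorem HahnSeries.pow_ne_single_pow_of_notMem_span {R : Type*} [Ring R] [NoZeroDivisors R]
    {Γ₀ : AddSubgroup ℝ} {δ : ℝ} (hind : δ ∉ Submodule.span ℚ (Γ₀ : Set ℝ)) {r : R} (hr : r ≠ 0)
    {m d : ℕ} (hd : 0 < d) (hdm : d < m) (b : HahnSeries ↥(Γ₀ ⊔ AddSubgroup.zmultiples δ) R) :
    b ^ m ≠ single ⟨δ, AddSubgroup.mem_sup_right (AddSubgroup.mem_zmultiples δ)⟩ r ^ d := by
  intro h
  have horder := congrArg (fun x ↦ ((x.order : ↥(Γ₀ ⊔ AddSubgroup.zmultiples δ)) : ℝ)) h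
  simp only [order_pow, order_single hr, AddSubgroup.coe_nsmul, nsmul_eq_mul] at horder
  have hdvd : (m : ℤ) ∣ d :=
    int_dvd_of_mul_eq_mul_of_notMem_span hind b.order.2 (by exact_mod_cast horder)
  exact absurd (Int.le_of_dvd (by omega) hdvd) (by omega)

theorem quotient_ring_decomposes_as_two_fields_general
    (Γ₀ : AddSubgroup ℝ) (δ : ℝ)
    (hind : δ ∉ Submodule.span ℚ (Γ₀ : Set ℝ))
    (n : ℕ) (hn : 2 ≤ n)
    (τ : HahnSeries ↥(Γ₀ ⊔ AddSubgroup.zmultiples δ) ℚ)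
    (hτ : τ = HahnSeries.single
      (⟨δ, (le_sup_right : AddSubgroup.zmultiples δ ≤ Γ₀ ⊔ AddSubgroup.zmultiples δ)
          (AddSubgroup.mem_zmultiples δ)⟩ : ↥(Γ₀ ⊔ AddSubgroup.zmultiples δ)) (1 : ℚ)) :
    IsField (AdjoinRoot ((X : Polynomial (HahnSeries ↥(Γ₀ ⊔ AddSubgroup.zmultiples δ) ℚ)) ^ (n - 1)
        - C τ)) ∧
    Nonempty
      (AdjoinRoot ((X : Polynomial (HahnSeries ↥(Γ₀ ⊔ AddSubgroup.zmultiples δ) ℚ)) ^ n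
          - C τ * X) ≃+*
        HahnSeries ↥(Γ₀ ⊔ AddSubgroup.zmultiples δ) ℚ ×
          AdjoinRoot ((X : Polynomial (HahnSeries ↥(Γ₀ ⊔ AddSubgroup.zmultiples δ) ℚ)) ^ (n - 1)
            - C τ)) := by
  have hτ0 : τ ≠ 0 := hτ ▸ HahnSeries.single_ne_zero one_ne_zero
  have hirr : Irreducible (X ^ (n - 1) - C τ) :=
    X_pow_sub_C_irreducible_of_forall_pow_ne_pow (by omega) fun _ b hd hdm ↦
      hτ ▸ HahnSeries.pow_ne_single_pow_of_notMem_span hind one_ne_zero hd hdm b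
  have : Fact (Irreducible (X ^ (n - 1) - C τ)) := ⟨hirr⟩
  exact ⟨Field.toIsField (AdjoinRoot (X ^ (n - 1) - C τ)),
    AdjoinRoot.nonempty_ringEquiv_prod_of_X_pow_sub_C_mul_X hτ0.isUnit hn⟩

/-- **Lemma 2.3 of the paper.**  Let `K_Γ = HahnSeries Γ ℚ` be the Novikov field with
`Γ = Γ₀ + ℤδ`, where `δ > 0` is ℚ-linearly independent from `Γ₀`, and let
`τ = single δ 1` (the paper's `t^{-δ}`).  For `n ≥ 2`, the quotient
`L = K_Γ[X]/(X^(n-1) - τ)` is a field, and the ring `R = K_Γ[X]/(X^n - τ·X)` is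
isomorphic, as a ring, to the product `K_Γ × L`; in particular `R` decomposes as a
direct sum of two fields. -/
theorem quotient_ring_decomposes_as_two_fields
    (Γ₀ : AddSubgroup ℝ) (δ : ℝ) (hδ : 0 < δ)
    (hind : δ ∉ Submodule.span ℚ (Γ₀ : Set ℝ))
    (n : ℕ) (hn : 2 ≤ n)
    (τ : HahnSeries ↥(Γ₀ ⊔ AddSubgroup.zmultiples δ) ℚ)
    (hτ : τ = HahnSeries.single
      (⟨δ, (le_sup_right : AddSubgroup.zmultiples δ ≤ Γ₀ ⊔ AddSubgroup.zmultiples δ)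
          (AddSubgroup.mem_zmultiples δ)⟩ : ↥(Γ₀ ⊔ AddSubgroup.zmultiples δ)) (1 : ℚ)) :
    IsField (AdjoinRoot ((X : Polynomial (HahnSeries ↥(Γ₀ ⊔ AddSubgroup.zmultiples δ) ℚ)) ^ (n - 1)
        - C τ)) ∧
    Nonempty
      (AdjoinRoot ((X : Polynomial (HahnSeries ↥(Γ₀ ⊔ AddSubgroup.zmultiples δ) ℚ)) ^ n
          - C τ * X) ≃+*
        HahnSeries ↥(Γ₀ ⊔ AddSubgroup.zmultiples δ) ℚ ×
          AdjoinRoot ((X : Polynomial (HahnSeries ↥(Γ₀ ⊔ AddSubgroup.zmultiples δ) ℚ)) ^ (n - 1)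
            - C τ)) :=
  quotient_ring_decomposes_as_two_fields_general Γ₀ δ hind n hn τ hτ
end

section
/- Work in R' = K[X] ⧸ (X^n − T^δ·X) as in the context, with n ≥ 2 and δ > 0, and with 𝒳 ⊆ R' as in the context. Then for every x ∈ 𝒳 the element 1 + x is a unit of R'; moreover there exists y ∈ 𝒳 with (1 + x)·(1 + y) = 1 (the inverse is given by the geometric series 1 − x + x² − ⋯). -/
/-!
Let `𝒪 = {a | 0 ≤ a.orderTop}` be the valuation ring of the Hahn series field; its maximal ideal
`𝔪` consists of the series supported in `(0, ∞)`. As `T^δ ∈ 𝒪`, the polynomial `X^n - T^δ X` is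
monic over `𝒪`, so `B = 𝒪[X]/(X^n - T^δ X)` is finite over the local ring `𝒪`. Every maximal
ideal of `B` therefore lies over `𝔪`, i.e. `𝔪B` is in the Jacobson radical of `B`. An element
of `𝒳` comes from `𝔪B`, so `1 + x` is a unit of `B` with inverse `1 + y`, `y = -x(1 + x)⁻¹ ∈ 𝔪B`;
reducing a representative of `y` modulo the monic polynomial keeps its coefficients in `𝔪` and
brings its degree below `n`.
-/

open Polynomial IsLocalRing

section Jacobson

variable {A B : Type*} [CommRing A] [CommRing B] [Algebra A B]

theorem Ideal.map_le_jacobson_bot_of_isIntegral [Algebra.IsIntegral A B] {I : Ideal A}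
    (hI : I ≤ (⊥ : Ideal A).jacobson) : I.map (algebraMap A B) ≤ (⊥ : Ideal B).jacobson := by
  refine le_sInf fun M ⟨_, hM⟩ => Ideal.map_le_iff_le_comap.2 ?_
  exact hI.trans (sInf_le ⟨bot_le, Ideal.isMaximal_comap_of_isIntegral_of_isMaximal M⟩)

theorem Ideal.exists_one_add_mul_one_add_eq_one {J : Ideal B} (hJ : J ≤ (⊥ : Ideal B).jacobson)
    {x : B} (hx : x ∈ J) : ∃ y ∈ J, (1 + x) * (1 + y) = 1 := by
  obtain ⟨u, hu⟩ := Ideal.mem_jacobson_bot.1 (hJ hx) 1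
  have hinv : (1 + x) * ↑u⁻¹ = 1 := by rw [add_comm, ← mul_one x, ← hu, Units.mul_inv]
  exact ⟨-(x * ↑u⁻¹), J.neg_mem (J.mul_mem_right _ hx), by linear_combination (-x) * hinv⟩

end Jacobson

namespace Polynomial

variable {A : Type*} [CommRing A]

theorem modByMonic_mem_map_C {I : Ideal A} {f g : A[X]} (hf : f.Monic) (hg : g ∈ I.map C) :
    g %ₘ f ∈ I.map C := by
  rw [← Ideal.mk_ker (I := I), ← ker_mapRingHom, RingHom.mem_ker, coe_mapRingHom] at hg ⊢
  rw [map_modByMonic _ hf, hg, zero_modByMonic]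

theorem exists_dvd_one_add_mul_one_add_sub_one [IsLocalRing A] {f p : A[X]} (hf : f.Monic)
    (hp : p ∈ (maximalIdeal A).map C) :
    ∃ q ∈ (maximalIdeal A).map C, q.degree < f.degree ∧ f ∣ (1 + p) * (1 + q) - 1 := by
  have := hf.finite_adjoinRoot
  have hJ : (maximalIdeal A).map (algebraMap A (AdjoinRoot f)) =
      ((maximalIdeal A).map C).map (AdjoinRoot.mk f) := by
    rw [Ideal.map_map]; rfl
  obtain ⟨y, hy, hpy⟩ := Ideal.exists_one_add_mul_one_add_eq_one
    (Ideal.map_le_jacobson_bot_of_isIntegral (maximalIdeal_le_jacobson _))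
    (hJ ▸ Ideal.mem_map_of_mem (AdjoinRoot.mk f) hp)
  obtain ⟨g, hg, rfl⟩ := (Ideal.mem_map_iff_of_surjective _ AdjoinRoot.mk_surjective).1 (hJ ▸ hy)
  refine ⟨g %ₘ f, modByMonic_mem_map_C hf hg, degree_modByMonic_lt g hf, ?_⟩
  have hmod : AdjoinRoot.mk f (g %ₘ f) = AdjoinRoot.mk f g := by
    rw [← AdjoinRoot.modByMonicHom_mk hf]; exact AdjoinRoot.mk_leftInverse hf _
  rw [← AdjoinRoot.mk_eq_zero, map_sub, map_mul, map_add, map_add, map_one, hmod, hpy, sub_self]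

theorem exists_map_dvd_one_add_mul_one_add_sub_one [IsLocalRing A] {K : Type*} [CommRing K]
    {φ : A →+* K} (hφ : Function.Injective φ) {f : A[X]} (hf : f.Monic) {p : K[X]}
    (hp : ∀ i, p.coeff i ∈ φ '' maximalIdeal A) :
    ∃ q : K[X], (∀ i, q.coeff i ∈ φ '' maximalIdeal A) ∧ q.degree < f.degree ∧
      f.map φ ∣ (1 + p) * (1 + q) - 1 := by
  obtain ⟨p, rfl⟩ := (mem_lifts p).1
    ((lifts_iff_coeff_lifts p).2 fun i => Set.image_subset_range _ _ (hp i))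
  have hp𝔪 : p ∈ (maximalIdeal A).map C := Ideal.mem_map_C_iff.2 fun i => by
    obtain ⟨a, ha, hai⟩ := hp i
    rw [coeff_map, hφ.eq_iff] at hai
    exact hai ▸ ha
  obtain ⟨q, hq, hqdeg, hdvd⟩ := exists_dvd_one_add_mul_one_add_sub_one hf hp𝔪
  refine ⟨q.map φ, fun i => ⟨q.coeff i, Ideal.mem_map_C_iff.1 hq i, (coeff_map _ _).symm⟩,
    degree_map_le.trans_lt hqdeg, ?_⟩
  simpa only [Polynomial.map_sub, Polynomial.map_mul, Polynomial.map_add, Polynomial.map_one]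
    using Polynomial.map_dvd φ hdvd

end Polynomial

namespace HahnSeries

variable {Γ R : Type*}

theorem coe_lt_orderTop_iff_support_subset_Ioi [LinearOrder Γ] [Zero R] {x : HahnSeries Γ R}
    {g : Γ} : (g : WithTop Γ) < x.orderTop ↔ x.support ⊆ Set.Ioi g := by
  refine ⟨fun h j hj => WithTop.coe_lt_coe.1 (h.trans_le (orderTop_le_of_coeff_ne_zero hj)),
    fun h => ?_⟩
  rcases eq_or_ne x 0 with rfl | hx
  · simp
  · rw [orderTop_of_ne_zero hx]
    exact WithTop.coe_lt_coe.2 (h (x.isWF_support.min_mem _))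

variable [AddCommGroup Γ] [LinearOrder Γ] [IsOrderedAddMonoid Γ] [Field R]

variable (Γ R) in
noncomputable def valuationSubring : ValuationSubring (HahnSeries Γ R) :=
  (addVal Γ R).toValuation.valuationSubring

-- In the multiplicative notation of `toValuation`, `v x ≤ 1` unfolds to `0 ≤ x.orderTop`.
theorem mem_valuationSubring_iff {x : HahnSeries Γ R} :
    x ∈ valuationSubring Γ R ↔ 0 ≤ x.orderTop :=
  Iff.rfl

theorem single_mem_valuationSubring {g : Γ} (hg : 0 ≤ g) (r : R) :
    single g r ∈ valuationSubring Γ R :=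
  mem_valuationSubring_iff.2 ((WithTop.coe_nonneg.2 hg).trans orderTop_single_le)

theorem mem_maximalIdeal_valuationSubring_iff {a : valuationSubring Γ R} :
    a ∈ maximalIdeal (valuationSubring Γ R) ↔ 0 < (a : HahnSeries Γ R).orderTop :=
  Valuation.mem_maximalIdeal_iff (v := (addVal Γ R).toValuation)

theorem mem_image_maximalIdeal_valuationSubring_iff {x : HahnSeries Γ R} :
    x ∈ (valuationSubring Γ R).subtype '' maximalIdeal (valuationSubring Γ R) ↔
      x.support ⊆ Set.Ioi 0 := by
  rw [← coe_lt_orderTop_iff_support_subset_Ioi, WithTop.coe_zero]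
  constructor
  · rintro ⟨a, ha, rfl⟩
    exact mem_maximalIdeal_valuationSubring_iff.1 ha
  · intro hx
    exact ⟨⟨x, mem_valuationSubring_iff.2 hx.le⟩, mem_maximalIdeal_valuationSubring_iff.2 hx, rfl⟩

end HahnSeries

/-- The set `𝒳` of elements of `R' = K[X]/(X^n - T^δ·X)` (with `K = HahnSeries ℝ ℚ` the
universal Novikov field and `T^δ = single δ 1`) that are images of polynomials of degree
at most `n` all of whose coefficients are Hahn series supported in `(0, ∞)`; these are
the elements `Σ rᵢ s^{dᵢ} T^{κᵢ}` with `0 ≤ dᵢ ≤ n` and `κᵢ > 0` of the paper. -/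
def posSupportSet (n : ℕ) (δ : ℝ) :
    Set (AdjoinRoot ((X : Polynomial (HahnSeries ℝ ℚ)) ^ n
      - C (HahnSeries.single δ (1 : ℚ)) * X)) :=
  { z | ∃ p : Polynomial (HahnSeries ℝ ℚ), p.natDegree ≤ n ∧
      (∀ i, (p.coeff i).support ⊆ Set.Ioi (0 : ℝ)) ∧
      AdjoinRoot.mk ((X : Polynomial (HahnSeries ℝ ℚ)) ^ n
        - C (HahnSeries.single δ (1 : ℚ)) * X) p = z }

/-- For every `x ∈ 𝒳`, the element `1 + x` is a unit of `R' = K[X]/(X^n - T^δ·X)`, with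
inverse of the form `1 + y` for some `y ∈ 𝒳` (given by the geometric series
`1 - x + x² - ⋯`).  (Used in §2.1 of the paper.) -/
theorem one_add_posSupport_isUnit (n : ℕ) (hn : 2 ≤ n) (δ : ℝ) (hδ : 0 < δ)
    (x : AdjoinRoot ((X : Polynomial (HahnSeries ℝ ℚ)) ^ n
      - C (HahnSeries.single δ (1 : ℚ)) * X))
    (hx : x ∈ posSupportSet n δ) :
    IsUnit (1 + x) ∧ ∃ y ∈ posSupportSet n δ, (1 + x) * (1 + y) = 1 := by
  obtain ⟨p, -, hp, rfl⟩ := hx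
  set f : (HahnSeries ℝ ℚ)[X] := X ^ n - C (HahnSeries.single δ 1) * X
  let t : HahnSeries.valuationSubring ℝ ℚ :=
    ⟨HahnSeries.single δ 1, HahnSeries.single_mem_valuationSubring hδ.le 1⟩
  have hlt : (C t * X).degree < (n : WithBot ℕ) := (degree_C_mul_X_le t).trans_lt (mod_cast hn)
  have hdeg : (X ^ n - C t * X).degree = (n : WithBot ℕ) := by
    rw [degree_sub_eq_left_of_degree_lt (by rwa [degree_X_pow]), degree_X_pow]
  have hmap : (X ^ n - C t * X).map (HahnSeries.valuationSubring ℝ ℚ).subtype = f := by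
    simp [f, t]
  obtain ⟨q, hq, hqdeg, hdvd⟩ := exists_map_dvd_one_add_mul_one_add_sub_one
    (HahnSeries.valuationSubring ℝ ℚ).subtype_injective (monic_X_pow_sub hlt)
    (fun i => HahnSeries.mem_image_maximalIdeal_valuationSubring_iff.2 (hp i))
  rw [hmap] at hdvd
  have hinv : (1 + AdjoinRoot.mk f p) * (1 + AdjoinRoot.mk f q) = 1 := by
    rw [← sub_eq_zero]
    simpa using AdjoinRoot.mk_eq_zero.2 hdvd
  refine ⟨.of_mul_eq_one _ hinv, _, ⟨q, ?_, ?_, rfl⟩, hinv⟩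
  · exact natDegree_le_of_degree_le (hdeg ▸ hqdeg.le)
  · exact fun i => HahnSeries.mem_image_maximalIdeal_valuationSubring_iff.1 (hq i)
end

section
/- Let Γ₀, δ, Γ, K_Γ and τ be as in the context, let K := HahnSeries ℝ ℚ with T^δ := HahnSeries.single δ (1 : ℚ), and let ι : K_Γ → K be the injective ring homomorphism of Hahn series induced by the inclusion Γ ↪ ℝ (an injective, order-preserving additive group homomorphism); note ι(τ) = T^δ. Then for every integer n ≥ 2 the ring homomorphism K_Γ[X] ⧸ (X^n − τ·X) → K[X] ⧸ (X^n − T^δ·X) induced by applying ι to coefficients of polynomials is injective. -/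
open Polynomial

/-- The embedding `ι : K_Γ → K` of Novikov fields, i.e. of Hahn series over
`Γ = Γ₀ + ℤδ` into Hahn series over `ℝ`, induced by the inclusion `Γ ↪ ℝ`. -/
noncomputable def novikovEmb (Γ₀ : AddSubgroup ℝ) (δ : ℝ) :
    HahnSeries ↥(Γ₀ ⊔ AddSubgroup.zmultiples δ) ℚ →+* HahnSeries ℝ ℚ :=
  HahnSeries.embDomainRingHom (Γ₀ ⊔ AddSubgroup.zmultiples δ).subtype
    Subtype.coe_injective (fun _ _ => Iff.rfl)

theorem AdjoinRoot.injective_of_mk_map {K L : Type*} [Field K] [Field L] {f : K →+* L}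
    {q : K[X]} {q' : L[X]} (hq : q.map f = q') {g : AdjoinRoot q →+* AdjoinRoot q'}
    (hg : ∀ p : K[X], g (mk q p) = mk q' (p.map f)) : Function.Injective g := by
  subst hq
  refine (injective_iff_map_eq_zero g).2 fun a ha => ?_
  obtain ⟨p, rfl⟩ := mk_surjective a
  rw [hg, mk_eq_zero, map_dvd_map'] at ha
  exact mk_eq_zero.2 ha

theorem novikovEmb_single (Γ₀ : AddSubgroup ℝ) (δ : ℝ) (γ : ↥(Γ₀ ⊔ AddSubgroup.zmultiples δ))
    (r : ℚ) : novikovEmb Γ₀ δ (HahnSeries.single γ r) = HahnSeries.single (γ : ℝ) r :=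
  HahnSeries.embDomain_single

theorem induced_map_on_quotients_injective_general
    (Γ₀ : AddSubgroup ℝ) (δ : ℝ)
    (n : ℕ)
    (τ : HahnSeries ↥(Γ₀ ⊔ AddSubgroup.zmultiples δ) ℚ)
    (hτ : τ = HahnSeries.single
      (⟨δ, (le_sup_right : AddSubgroup.zmultiples δ ≤ Γ₀ ⊔ AddSubgroup.zmultiples δ)
          (AddSubgroup.mem_zmultiples δ)⟩ : ↥(Γ₀ ⊔ AddSubgroup.zmultiples δ)) (1 : ℚ))
    (g : AdjoinRoot ((X : Polynomial (HahnSeries ↥(Γ₀ ⊔ AddSubgroup.zmultiples δ) ℚ)) ^ n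
          - C τ * X) →+*
        AdjoinRoot ((X : Polynomial (HahnSeries ℝ ℚ)) ^ n
          - C (HahnSeries.single δ (1 : ℚ)) * X))
    (hg : ∀ p : Polynomial (HahnSeries ↥(Γ₀ ⊔ AddSubgroup.zmultiples δ) ℚ),
      g (AdjoinRoot.mk ((X : Polynomial (HahnSeries ↥(Γ₀ ⊔ AddSubgroup.zmultiples δ) ℚ)) ^ n
            - C τ * X) p) =
        AdjoinRoot.mk ((X : Polynomial (HahnSeries ℝ ℚ)) ^ n
            - C (HahnSeries.single δ (1 : ℚ)) * X) (p.map (novikovEmb Γ₀ δ))) :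
    Function.Injective g := by
  refine AdjoinRoot.injective_of_mk_map ?_ hg
  simp only [Polynomial.map_sub, Polynomial.map_mul, Polynomial.map_pow, map_X, map_C, hτ,
    novikovEmb_single]

/-- **Injectivity claim of Remark 2.8 of the paper.**  With `δ > 0` a real number
ℚ-linearly independent from `Γ₀`, `Γ = Γ₀ + ℤδ`, `τ = single δ 1 ∈ K_Γ = HahnSeries Γ ℚ`,
`T^δ = single δ 1 ∈ K = HahnSeries ℝ ℚ`, and `n ≥ 2`, the ring homomorphism
`K_Γ[X]/(X^n - τ·X) → K[X]/(X^n - T^δ·X)` induced by applying `ι = novikovEmb Γ₀ δ` to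
the coefficients of polynomials is injective. -/
theorem induced_map_on_quotients_injective
    (Γ₀ : AddSubgroup ℝ) (δ : ℝ) (hδ : 0 < δ)
    (hind : δ ∉ Submodule.span ℚ (Γ₀ : Set ℝ))
    (n : ℕ) (hn : 2 ≤ n)
    (τ : HahnSeries ↥(Γ₀ ⊔ AddSubgroup.zmultiples δ) ℚ)
    (hτ : τ = HahnSeries.single
      (⟨δ, (le_sup_right : AddSubgroup.zmultiples δ ≤ Γ₀ ⊔ AddSubgroup.zmultiples δ)
          (AddSubgroup.mem_zmultiples δ)⟩ : ↥(Γ₀ ⊔ AddSubgroup.zmultiples δ)) (1 : ℚ))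
    (g : AdjoinRoot ((X : Polynomial (HahnSeries ↥(Γ₀ ⊔ AddSubgroup.zmultiples δ) ℚ)) ^ n
          - C τ * X) →+*
        AdjoinRoot ((X : Polynomial (HahnSeries ℝ ℚ)) ^ n
          - C (HahnSeries.single δ (1 : ℚ)) * X))
    (hg : ∀ p : Polynomial (HahnSeries ↥(Γ₀ ⊔ AddSubgroup.zmultiples δ) ℚ),
      g (AdjoinRoot.mk ((X : Polynomial (HahnSeries ↥(Γ₀ ⊔ AddSubgroup.zmultiples δ) ℚ)) ^ n
            - C τ * X) p) =
        AdjoinRoot.mk ((X : Polynomial (HahnSeries ℝ ℚ)) ^ n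
            - C (HahnSeries.single δ (1 : ℚ)) * X) (p.map (novikovEmb Γ₀ δ))) :
    Function.Injective g :=
  induced_map_on_quotients_injective_general Γ₀ δ n τ hτ g hg
end
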